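/- arXiv:2412.10335 — 7 statements merged into one kernel-verified Lean document; each statement's English description precedes it below -/
import Mathlib

section
/- Let G be a finite simple graph and e = {x,y} an edge of G. If e is a regular edge (i.e., no minimal vertex cover of G contains both x and y), then e is not contained in any triangle of G. -/
/-!
Extend `{b}` to a maximal independent set `S`. The complement of a maximal independent set is a
minimal vertex cover, and it contains both neighbours `x` and `y` of `b`.
-/

/-- `X` is a vertex cover of `G`: every edge has an endpoint in `X`. -/
def SimpleGraph.IsVertexCover' {V : Type*} (G : SimpleGraph V) (X : Set V) : Prop :=
  ∀ ⦃u v : V⦄, G.Adj u v → u ∈ X ∨ v ∈ X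

/-- `X` is a minimal vertex cover of `G`. -/
def SimpleGraph.IsMinVertexCover {V : Type*} (G : SimpleGraph V) (X : Set V) : Prop :=
  G.IsVertexCover' X ∧ ∀ Y ⊆ X, G.IsVertexCover' Y → Y = X

/-- An edge `{x,y}` is regular: no minimal vertex cover contains both endpoints. -/
def SimpleGraph.IsRegularEdge {V : Type*} (G : SimpleGraph V) (x y : V) : Prop :=
  ∀ X : Set V, G.IsMinVertexCover X → ¬(x ∈ X ∧ y ∈ X)

namespace SimpleGraph

variable {V : Type*} {G : SimpleGraph V}

theorem isVertexCover'_compl_iff {S : Set V} : G.IsVertexCover' Sᶜ ↔ G.IsIndepSet S := by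
  simp only [IsVertexCover', Set.mem_compl_iff, ← not_and_or, IsIndepSet, Set.Pairwise]
  exact ⟨fun h u hu v hv _ huv => h huv ⟨hu, hv⟩, fun h u v huv ⟨hu, hv⟩ => h hu hv huv.ne huv⟩

theorem IsIndepSet.exists_maximal_superset {s : Set V} (hs : G.IsIndepSet s) :
    ∃ S, s ⊆ S ∧ Maximal G.IsIndepSet S :=
  zorn_subset_nonempty {S | G.IsIndepSet S} (fun _ hc hchain _ =>
    ⟨_, hchain.pairwise_sUnion.2 hc, fun _ => Set.subset_sUnion_of_mem⟩) s hs

theorem isMinVertexCover_compl_of_maximal {S : Set V} (hS : Maximal G.IsIndepSet S) :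
    G.IsMinVertexCover Sᶜ := by
  refine ⟨isVertexCover'_compl_iff.2 hS.prop, fun Y hYS hY => hYS.antisymm ?_⟩
  have hYc : G.IsIndepSet Yᶜ := isVertexCover'_compl_iff.1 (by rwa [compl_compl])
  exact Set.compl_subset_comm.2 (hS.2 hYc (Set.subset_compl_comm.2 hYS))

end SimpleGraph

theorem regular_edge_not_in_triangle_general {V : Type*}
    (G : SimpleGraph V) (x y : V)
    (hreg : G.IsRegularEdge x y) :
    ∀ b : V, ¬(G.Adj x b ∧ G.Adj y b) := by
  rintro b ⟨hxb, hyb⟩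
  obtain ⟨S, hbS, hS⟩ := SimpleGraph.IsIndepSet.exists_maximal_superset (Set.pairwise_singleton b _)
  have hxS : x ∉ S := fun hx => hS.prop hx (hbS rfl) hxb.ne hxb
  have hyS : y ∉ S := fun hy => hS.prop hy (hbS rfl) hyb.ne hyb
  exact hreg Sᶜ (G.isMinVertexCover_compl_of_maximal hS) ⟨hxS, hyS⟩

/-- a regular edge is not contained in any triangle. -/
theorem regular_edge_not_in_triangle {V : Type*} [Fintype V]
    (G : SimpleGraph V) (x y : V) (hxy : G.Adj x y)
    (hreg : G.IsRegularEdge x y) :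
    ∀ b : V, ¬(G.Adj x b ∧ G.Adj y b) :=
  regular_edge_not_in_triangle_general G x y hreg
end

section
/- Let G be a finite simple graph and {x,y} a regular edge of G. Then for any vertices a ∈ N(x) \ {y} and b ∈ N(y) \ {x}, we have a ≠ b, {a,y} ∉ E(G), {x,b} ∉ E(G), and {a,b} ∈ E(G); that is, the induced subgraph on {a,x,y,b} is a 4-cycle. -/
/-!
If an independent set `I` contains a neighbour of `x` and a neighbour of `y`, then the vertex
cover `Iᶜ` shrinks (the graph being finite) to a minimal vertex cover, still disjoint from `I`,
which must then contain both `x` and `y`. So for a regular edge `{x,y}` no such `I` exists.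
Taking `I = {a}` rules out the chords `ay` and `xb` (and hence `a = b`), and taking `I = {a, b}`
forces the edge `ab`.
-/

namespace SimpleGraph

variable {V : Type*} {G : SimpleGraph V}

theorem isVertexCover'_iff {X : Set V} : G.IsVertexCover' X ↔ G.IsVertexCover X := Iff.rfl

theorem IsVertexCover'.exists_isMinVertexCover_subset [Finite V] {X : Set V}
    (hX : G.IsVertexCover' X) : ∃ Y ⊆ X, G.IsMinVertexCover Y := by
  obtain ⟨Y, hYX, hYmin⟩ := exists_minimal_le_of_wellFoundedLT G.IsVertexCover' X hX
  exact ⟨Y, hYX, hYmin.prop, fun _ hZY hZ => hYmin.eq_of_le hZ hZY⟩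

theorem IsRegularEdge.not_adj_of_isIndepSet [Finite V] {x y : V} (hreg : G.IsRegularEdge x y)
    {I : Set V} (hI : G.IsIndepSet I) {a b : V} (ha : a ∈ I) (hb : b ∈ I) (hxa : G.Adj x a) :
    ¬ G.Adj y b := by
  intro hyb
  obtain ⟨Y, hYI, hY⟩ :=
    (isVertexCover'_iff.mpr (isVertexCover_compl.mpr hI)).exists_isMinVertexCover_subset
  have hxY : x ∈ Y := (hY.1 hxa).resolve_right fun haY => hYI haY ha
  have hyY : y ∈ Y := (hY.1 hyb).resolve_right fun hbY => hYI hbY hb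
  exact hreg Y hY ⟨hxY, hyY⟩

end SimpleGraph

theorem regular_edge_four_cycle_general {V : Type*} [Fintype V]
    (G : SimpleGraph V) (x y : V)
    (hreg : G.IsRegularEdge x y) :
    ∀ a b : V, G.Adj x a → a ≠ y → G.Adj y b → b ≠ x →
      a ≠ b ∧ ¬ G.Adj a y ∧ ¬ G.Adj x b ∧ G.Adj a b := by
  intro a b hxa _ hyb _
  have hay : ¬ G.Adj a y := fun hay =>
    hreg.not_adj_of_isIndepSet (Set.pairwise_singleton a _) rfl rfl hxa hay.symm
  have hxb : ¬ G.Adj x b := fun hxb =>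
    hreg.not_adj_of_isIndepSet (Set.pairwise_singleton b _) rfl rfl hxb hyb
  have hab : a ≠ b := by
    rintro rfl
    exact hay hyb.symm
  refine ⟨hab, hay, hxb, ?_⟩
  by_contra hnab
  have hI : G.IsIndepSet {a, b} :=
    Set.pairwise_pair.mpr fun _ => ⟨hnab, fun hba => hnab hba.symm⟩
  exact hreg.not_adj_of_isIndepSet hI (by simp) (by simp) hxa hyb

/-- neighbors of the endpoints of a regular edge form induced 4-cycles. -/
theorem regular_edge_four_cycle {V : Type*} [Fintype V]
    (G : SimpleGraph V) (x y : V) (hxy : G.Adj x y)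
    (hreg : G.IsRegularEdge x y) :
    ∀ a b : V, G.Adj x a → a ≠ y → G.Adj y b → b ≠ x →
      a ≠ b ∧ ¬ G.Adj a y ∧ ¬ G.Adj x b ∧ G.Adj a b :=
  regular_edge_four_cycle_general G x y hreg
end

section
/- Let G be a finite simple graph, {x,y} an edge of G with y a leaf (y has exactly one neighbor, namely x), and let {x,z} be another edge of G with z ≠ y. Then {x,z} is a regular edge of G if and only if z is a leaf. -/
/-!
If `z` has no neighbour other than `x`, then in a minimal vertex cover containing `x` the vertex
`z` is redundant, so `{x,z}` is regular. Conversely, if `z` has a neighbour `w ≠ x`, then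
`{y, w}` is independent (the only neighbour of `y` is `x`), so some minimal vertex cover avoids
both `y` and `w`; covering the edges `{x,y}` and `{z,w}` forces it to contain `x` and `z`.
-/

namespace SimpleGraph

variable {V : Type*} {G : SimpleGraph V}

theorem IsIndepSet.isVertexCover'_compl {S : Set V} (hS : G.IsIndepSet S) :
    G.IsVertexCover' Sᶜ := by
  intro u v huv
  by_contra! h
  simp only [Set.notMem_compl_iff] at h
  exact hS h.1 h.2 huv.ne huv

theorem IsIndepSet.exists_isMinVertexCover_disjoint [Finite V] {S : Set V}
    (hS : G.IsIndepSet S) : ∃ X, G.IsMinVertexCover X ∧ Disjoint X S := by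
  obtain ⟨X, hXS, hX⟩ := hS.isVertexCover'_compl.exists_isMinVertexCover_subset
  exact ⟨X, hX, Set.subset_compl_iff_disjoint_right.mp hXS⟩

theorem IsMinVertexCover.exists_adj_notMem {X : Set V} (hX : G.IsMinVertexCover X) {v : V}
    (hv : v ∈ X) : ∃ w, G.Adj v w ∧ w ∉ X := by
  by_contra! h
  have hcover : G.IsVertexCover' (X \ {v}) := by
    intro a b hab
    rcases eq_or_ne a v with rfl | hav
    · exact .inr ⟨h b hab, hab.ne.symm⟩
    rcases eq_or_ne b v with rfl | hbv
    · exact .inl ⟨h a hab.symm, hab.ne⟩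
    exact (hX.1 hab).imp (⟨·, hav⟩) (⟨·, hbv⟩)
  have hv' : v ∉ X \ {v} := fun h => h.2 rfl
  exact hv' (by rwa [hX.2 _ Set.sdiff_subset hcover])

theorem isRegularEdge_of_forall_adj_eq {x z : V} (hz : ∀ w, G.Adj z w → w = x) :
    G.IsRegularEdge x z := by
  rintro X hX ⟨hxX, hzX⟩
  obtain ⟨w, hzw, hwX⟩ := hX.exists_adj_notMem hzX
  exact hwX (hz w hzw ▸ hxX)

end SimpleGraph

open SimpleGraph in
theorem regular_edge_iff_leaf_general {V : Type*} [Fintype V]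
    (G : SimpleGraph V) (x y z : V) (hxy : G.Adj x y)
    (hyleaf : ∀ w : V, G.Adj y w → w = x) :
    G.IsRegularEdge x z ↔ ∀ w : V, G.Adj z w → w = x := by
  refine ⟨fun hreg => ?_, isRegularEdge_of_forall_adj_eq⟩
  by_contra! ⟨w, hzw, hwx⟩
  have hindep : G.IsIndepSet {y, w} :=
    Set.pairwise_pair.mpr fun _ => ⟨fun hyw => hwx (hyleaf w hyw),
      fun hwy => hwx (hyleaf w hwy.symm)⟩
  obtain ⟨X, hX, hXS⟩ := hindep.exists_isMinVertexCover_disjoint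
  have hyX : y ∉ X := hXS.notMem_of_mem_right (by simp)
  have hwX : w ∉ X := hXS.notMem_of_mem_right (by simp)
  exact hreg X hX ⟨(hX.1 hxy).resolve_right hyX, (hX.1 hzw).resolve_right hwX⟩

/-- if `y` is a leaf attached to `x`, then an edge `{x,z}` (with `z ≠ y`)
is regular iff `z` is a leaf. -/
theorem regular_edge_iff_leaf {V : Type*} [Fintype V]
    (G : SimpleGraph V) (x y z : V) (hxy : G.Adj x y)
    (hyleaf : ∀ w : V, G.Adj y w → w = x)
    (hxz : G.Adj x z) (hzy : z ≠ y) :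
    G.IsRegularEdge x z ↔ ∀ w : V, G.Adj z w → w = x :=
  regular_edge_iff_leaf_general G x y z hxy hyleaf
end

section
/- Let G be a finite simple graph with edges e = {x,y} and f = {u,v} such that u, v, x, y are four distinct vertices, {u,v} has Property P in G, and the induced subgraph of G on {u,v,x,y} is not a 4-cycle. Let G_e be the graph (with a loop at x) obtained by identifying y with x. Then {u,v} has Property P in G_e. -/
/-- A graph possibly with loops: a symmetric relation on `V`. -/
structure LoopGraph (V : Type*) where
  Adj : V → V → Prop
  symm : ∀ u v : V, Adj u v → Adj v u

/-- Property P for an edge `{u,v}` of a graph possibly with loops: neither endpoint has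
a loop, and any neighbor of `u` (other than `v`) and any neighbor of `v` (other than `u`)
are distinct and adjacent. -/
def LoopGraph.HasPropertyP {V : Type*} (G : LoopGraph V) (u v : V) : Prop :=
  ¬ G.Adj u u ∧ ¬ G.Adj v v ∧
    ∀ a b : V, G.Adj a u → a ≠ v → G.Adj v b → b ≠ u → a ≠ b ∧ G.Adj a b

/-- Property P for an edge `{x,y}` of a simple graph. -/
def SimpleGraph.HasPropertyP {V : Type*} (G : SimpleGraph V) (x y : V) : Prop :=
  ∀ a b : V, G.Adj a x → a ≠ y → G.Adj y b → b ≠ x → a ≠ b ∧ G.Adj a b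

/-- The contraction `G_e` of a simple graph along the edge `e = {x,y}`: identify `y`
with `x`; it acquires a loop at `x`. -/
def SimpleGraph.contractEdge {V : Type*} (G : SimpleGraph V) (x y : V) :
    LoopGraph {v : V // v ≠ y} where
  Adj a b := G.Adj a.1 b.1 ∨ (a.1 = x ∧ G.Adj y b.1) ∨ (b.1 = x ∧ G.Adj a.1 y)
  symm := by
    rintro ⟨a, ha⟩ ⟨b, hb⟩ (h | ⟨h1, h2⟩ | ⟨h1, h2⟩)
    · exact Or.inl h.symm
    · exact Or.inr (Or.inr ⟨h1, h2.symm⟩)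
    · exact Or.inr (Or.inl ⟨h1, h2.symm⟩)

/-! Every neighbour of `u` (resp. `v`) in `G_e` lifts to a neighbour of `u` (resp. `v`) in `G`,
where `x` may lift to `y`. Property P in `G` makes the two lifts distinct and adjacent, and
adjacency descends to `G_e`. Two distinct lifts of the same vertex must be `x` and `y`; then
`u ~ x, v ~ y` (or `u ~ y, v ~ x`), and since `u` and `v` have no common neighbour, `u,v,x,y`
induce a 4-cycle. -/

namespace SimpleGraph

variable {V : Type*}

/-- The vertex `w` of `G` becomes the vertex `a` of `G.contractEdge x y`. -/
def ContractsTo (x y w : V) (a : {v : V // v ≠ y}) : Prop :=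
  w = a.1 ∨ (w = y ∧ a.1 = x)

variable {x y : V}

theorem ContractsTo.ne {w z : V} {a : {v : V // v ≠ y}} (h : ContractsTo x y w a)
    (hz : z ≠ y) (ha : a ≠ ⟨z, hz⟩) : w ≠ z := by
  rintro rfl
  rcases h with h | ⟨rfl, -⟩
  · exact ha (Subtype.ext h.symm)
  · exact hz rfl

theorem ContractsTo.eq_or_eq {w w' : V} {a : {v : V // v ≠ y}} (h : ContractsTo x y w a)
    (h' : ContractsTo x y w' a) : w = w' ∨ (w = x ∧ w' = y) ∨ (w = y ∧ w' = x) := by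
  rcases h with h | ⟨hw, hx⟩ <;> rcases h' with h' | ⟨hw', hx'⟩
  · exact Or.inl (h.trans h'.symm)
  · exact Or.inr (Or.inl ⟨h.trans hx', hw'⟩)
  · exact Or.inr (Or.inr ⟨hw, h'.trans hx⟩)
  · exact Or.inl (hw.trans hw'.symm)

variable (G : SimpleGraph V)

theorem contractEdge_adj_of_adj {w w' : V} {a b : {v : V // v ≠ y}}
    (ha : ContractsTo x y w a) (hb : ContractsTo x y w' b) (h : G.Adj w w') :
    (G.contractEdge x y).Adj a b := by
  rcases ha with rfl | ⟨rfl, hax⟩ <;> rcases hb with rfl | ⟨rfl, hbx⟩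
  · exact Or.inl h
  · exact Or.inr (Or.inr ⟨hbx, h⟩)
  · exact Or.inr (Or.inl ⟨hax, h⟩)
  · exact absurd h G.irrefl

theorem contractEdge_not_adj_self {a : {v : V // v ≠ y}} (hax : a.1 ≠ x) :
    ¬ (G.contractEdge x y).Adj a a := by
  rintro (h | ⟨h, -⟩ | ⟨h, -⟩)
  · exact G.irrefl h
  · exact hax h
  · exact hax h

theorem exists_contractsTo_adj_of_contractEdge_adj {w : V} (hwx : w ≠ x) (hwy : w ≠ y)
    {a : {v : V // v ≠ y}} (h : (G.contractEdge x y).Adj a ⟨w, hwy⟩) :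
    ∃ w', ContractsTo x y w' a ∧ G.Adj w' w := by
  rcases h with h | ⟨hax, h⟩ | ⟨h, -⟩
  · exact ⟨a.1, Or.inl rfl, h⟩
  · exact ⟨y, Or.inr ⟨rfl, hax⟩, h⟩
  · exact absurd h hwx

variable {G}

theorem HasPropertyP.not_adj_of_adj {u v w : V} (hP : G.HasPropertyP u v) (hwu : G.Adj w u) :
    ¬ G.Adj v w := fun hvw =>
  (hP w w hwu hvw.ne' hvw hwu.ne).1 rfl

theorem HasPropertyP.not_adj_cross_of_adj {u v a b : V} (hP : G.HasPropertyP u v)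
    (hau : G.Adj a u) (hvb : G.Adj v b) : ¬ G.Adj u b ∧ ¬ G.Adj v a :=
  ⟨fun hub => hP.not_adj_of_adj hub.symm hvb, hP.not_adj_of_adj hau⟩

end SimpleGraph

theorem propertyP_descends_to_contraction_general {V : Type*}
    (G : SimpleGraph V) (u v x y : V)
    (hux : u ≠ x) (huy : u ≠ y) (hvx : v ≠ x) (hvy : v ≠ y)
    (hP : G.HasPropertyP u v)
    (hnc : ¬((G.Adj u x ∧ G.Adj v y ∧ ¬ G.Adj u y ∧ ¬ G.Adj v x) ∨
             (G.Adj u y ∧ G.Adj v x ∧ ¬ G.Adj u x ∧ ¬ G.Adj v y))) :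
    (G.contractEdge x y).HasPropertyP ⟨u, huy⟩ ⟨v, hvy⟩ := by
  refine ⟨G.contractEdge_not_adj_self hux, G.contractEdge_not_adj_self hvx, ?_⟩
  intro a b hau hav hvb hbu
  obtain ⟨a', ha', ha'u⟩ := G.exists_contractsTo_adj_of_contractEdge_adj hux huy hau
  obtain ⟨b', hb', hb'v⟩ :=
    G.exists_contractsTo_adj_of_contractEdge_adj hvx hvy ((G.contractEdge x y).symm _ _ hvb)
  obtain ⟨hne, hadj⟩ := hP a' b' ha'u (ha'.ne hvy hav) hb'v.symm (hb'.ne huy hbu)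
  refine ⟨?_, G.contractEdge_adj_of_adj ha' hb' hadj⟩
  rintro rfl
  rcases ha'.eq_or_eq hb' with h | ⟨rfl, rfl⟩ | ⟨rfl, rfl⟩
  · exact hne h
  · exact hnc (Or.inl ⟨ha'u.symm, hb'v.symm, hP.not_adj_cross_of_adj ha'u hb'v.symm⟩)
  · exact hnc (Or.inr ⟨ha'u.symm, hb'v.symm, hP.not_adj_cross_of_adj ha'u hb'v.symm⟩)

/-- if `{u,v}` has Property P in `G`, the vertices `u,v,x,y` are distinct,
and the induced subgraph on `{u,v,x,y}` is not a 4-cycle, then `{u,v}` has Property P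
in the contraction `G_e`, `e = {x,y}`. -/
theorem propertyP_descends_to_contraction {V : Type*} [Fintype V]
    (G : SimpleGraph V) (u v x y : V)
    (huv : G.Adj u v) (hxy : G.Adj x y)
    (huv' : u ≠ v) (hux : u ≠ x) (huy : u ≠ y) (hvx : v ≠ x) (hvy : v ≠ y)
    (hxy' : x ≠ y)
    (hP : G.HasPropertyP u v)
    (hnc : ¬((G.Adj u x ∧ G.Adj v y ∧ ¬ G.Adj u y ∧ ¬ G.Adj v x) ∨
             (G.Adj u y ∧ G.Adj v x ∧ ¬ G.Adj u x ∧ ¬ G.Adj v y))) :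
    (G.contractEdge x y).HasPropertyP ⟨u, huy⟩ ⟨v, hvy⟩ :=
  propertyP_descends_to_contraction_general G u v x y hux huy hvx hvy hP hnc
end

section
/- Let G be a finite simple graph with a perfect matching M = {{x_1,y_1},…,{x_t,y_t}} such that every edge of M has Property P and for each i ≥ 2, N(x_i) ∩ {x_1,y_1,…,x_{i−1},y_{i−1}} = ∅. Then the set {x_1,…,x_t} is an independent set of G and {y_1,…,y_t} is a vertex cover of G of cardinality t = |V(G)|/2. -/
/-!
The ordering condition already forbids every edge between two `x`'s, since each such edge
joins an `x_i` to an earlier `x_j`. As the matching is perfect, the `y`'s are the complement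
of this independent set, hence a vertex cover.
-/

namespace SimpleGraph

variable {V : Type*} (G : SimpleGraph V)

theorem not_adj_of_forall_lt_not_adj {ι : Type*} [LinearOrder ι] (x : ι → V)
    (h : ∀ i j, j < i → ¬ G.Adj (x i) (x j)) (i j : ι) : ¬ G.Adj (x i) (x j) := by
  intro hadj
  rcases lt_trichotomy j i with hji | rfl | hij
  · exact h i j hji hadj
  · exact G.irrefl hadj
  · exact h j i hij hadj.symm

theorem isVertexCover_range_of_surjective_sumElim {ι κ : Type*} (x : ι → V) (y : κ → V)
    (hsurj : Function.Surjective (Sum.elim x y)) (hx : ∀ i j, ¬ G.Adj (x i) (x j)) :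
    G.IsVertexCover (Set.range y) := by
  rw [← isIndepSet_compl_iff_isVertexCover]
  have hcompl : (Set.range y)ᶜ ⊆ Set.range x := by
    rw [Set.compl_subset_iff_union, Set.union_comm, ← Set.Sum.elim_range, hsurj.range_eq]
  rintro _ hu _ hv -
  obtain ⟨i, rfl⟩ := hcompl hu
  obtain ⟨j, rfl⟩ := hcompl hv
  exact hx i j

end SimpleGraph

theorem matching_gives_independent_and_cover_general {V : Type*} [Fintype V]
    (G : SimpleGraph V) (t : ℕ) (x y : Fin t → V)
    (hperf : Function.Bijective (fun i : Fin t ⊕ Fin t => Sum.elim x y i))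
    (hsep : ∀ i j : Fin t, j < i →
      ¬ G.Adj (x i) (x j) ∧ ¬ G.Adj (x i) (y j)) :
    (∀ i j : Fin t, ¬ G.Adj (x i) (x j)) ∧
      G.IsVertexCover' (Set.range y) ∧
      (Set.range y).ncard = t ∧ 2 * t = Fintype.card V := by
  have hind := G.not_adj_of_forall_lt_not_adj x fun i j hji => (hsep i j hji).1
  refine ⟨hind, G.isVertexCover_range_of_surjective_sumElim x y hperf.surjective hind, ?_, ?_⟩
  · have hy : Function.Injective y := hperf.injective.comp Sum.inr_injective
    rw [Set.ncard_range_of_injective hy, Nat.card_fin]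
  · rw [← Fintype.card_of_bijective hperf, Fintype.card_sum, Fintype.card_fin, two_mul]

/-- given a perfect matching `{x_i, y_i}` with Property P such that each
`x_i` has no neighbor among the earlier matched vertices, the `x_i` form an independent
set and the `y_i` form a vertex cover of cardinality `t = |V|/2`. -/
theorem matching_gives_independent_and_cover {V : Type*} [Fintype V]
    (G : SimpleGraph V) (t : ℕ) (x y : Fin t → V)
    (hperf : Function.Bijective (fun i : Fin t ⊕ Fin t => Sum.elim x y i))
    (hedge : ∀ i : Fin t, G.Adj (x i) (y i))
    (hP : ∀ i : Fin t, G.HasPropertyP (x i) (y i))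
    (hsep : ∀ i j : Fin t, j < i →
      ¬ G.Adj (x i) (x j) ∧ ¬ G.Adj (x i) (y j)) :
    (∀ i j : Fin t, ¬ G.Adj (x i) (x j)) ∧
      G.IsVertexCover' (Set.range y) ∧
      (Set.range y).ncard = t ∧ 2 * t = Fintype.card V :=
  matching_gives_independent_and_cover_general G t x y hperf hsep
end

section
/- Let G be a finite simple graph without isolated vertices having a perfect matching M = {e_1,…,e_d} where each e_i = {x_i,y_i} has Property P and N(x_i) ∩ {x_1,y_1,…,x_{i−1},y_{i−1}} = ∅ for 2 ≤ i ≤ d. Then for each k, the k-th entry h_k of the h-vector of R/I(G) equals the number of k-element subsets of M that form an induced matching of G. -/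
open MvPolynomial

/-- The edge ideal of a simple graph. -/
noncomputable def SimpleGraph.edgeIdeal (k : Type*) [Field k] {V : Type*}
    (G : SimpleGraph V) : Ideal (MvPolynomial V k) :=
  Ideal.span {p | ∃ u v : V, G.Adj u v ∧ p = X u * X v}

/-- The Hilbert series of `R/I` for `R = k[σ]` graded by total degree:
`Σ_s dim_k (R/I)_s t^s`. -/
noncomputable def quotHilbertSeries (k : Type*) [Field k] (σ : Type*)
    (I : Ideal (MvPolynomial σ k)) : PowerSeries ℤ :=
  PowerSeries.mk fun s =>
    (Module.finrank k
      (Submodule.map (Ideal.Quotient.mkₐ k I).toLinearMap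
        (MvPolynomial.homogeneousSubmodule σ k s)) : ℤ)

/-!
The standard monomials of `I(G)` are those supported on independent sets, so
`HS(t) = ∑_W (t/(1-t))^|W|` over the independent sets `W` of `G`, and
`HS(t)·(1-t)^d = ∑_W t^|W| (1-t)^(d-|W|)` is the `h`-polynomial of the independence complex.
Complete an independent set `W` to the facet `c(W)` that takes, on each edge `{x i, y i}`, the
vertex `y i` if `x i` has a neighbour in `W` and `x i` otherwise. Property P and the separability
condition make `c(W)` independent and make the faces with completion `g` exactly the interval
`[r(g), g]`, where `r(g)` consists of the `y i ∈ g` that are the only neighbour of `x i` in `g`.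
Summing over an interval leaves `t^|r(g)|`, and `g ↦ {i | y i ∈ r(g)}` is a bijection from the
facets onto the induced submatchings of the matching.
-/

open Finset Function

namespace Finset

variable {α R : Type*} [DecidableEq α] [CommRing R]

theorem sum_Icc_pow_mul_one_sub_pow {s t : Finset α} (hst : s ⊆ t) (u : R) :
    ∑ W ∈ Icc s t, u ^ #W * (1 - u) ^ (#t - #W) = u ^ #s := by
  have hdisj : ∀ T ∈ (t \ s).powerset, Disjoint s T := fun T hT =>
    disjoint_of_subset_right (mem_powerset.1 hT) disjoint_sdiff
  rw [Icc_eq_image_powerset hst, sum_image fun T hT T' hT' h => by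
    rw [← union_sdiff_cancel_left (hdisj T hT), ← union_sdiff_cancel_left (hdisj T' hT')]
    exact congrArg (· \ s) h]
  calc ∑ T ∈ (t \ s).powerset, u ^ #(s ∪ T) * (1 - u) ^ (#t - #(s ∪ T))
      = ∑ T ∈ (t \ s).powerset, u ^ #s * (u ^ #T * (1 - u) ^ (#(t \ s) - #T)) := by
        refine sum_congr rfl fun T hT => ?_
        rw [card_union_of_disjoint (hdisj T hT), card_sdiff_of_subset hst, pow_add, mul_assoc,
          Nat.sub_add_eq, Nat.sub_right_comm]
    _ = u ^ #s := by rw [← mul_sum, sum_pow_mul_eq_add_pow, add_sub_cancel, one_pow, mul_one]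

theorem sum_pow_mul_one_sub_pow_eq_of_interval_partition (u : R) {d : ℕ}
    (F : Finset (Finset α)) (c r : Finset α → Finset α) (hcard : ∀ W ∈ F, #(c W) = d)
    (hfiber : ∀ W ∈ F, ∀ W', W' ∈ F ∧ c W' = c W ↔ r (c W) ⊆ W' ∧ W' ⊆ c W) :
    ∑ W ∈ F, u ^ #W * (1 - u) ^ (d - #W) = ∑ g ∈ F.image c, u ^ #(r g) := by
  refine (sum_image' _ fun W hW => ?_).symm
  obtain ⟨hrW, hWc⟩ := (hfiber W hW W).1 ⟨hW, rfl⟩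
  rw [← hcard W hW, ← sum_Icc_pow_mul_one_sub_pow (hrW.trans hWc)]
  congr 1
  ext W'
  rw [mem_filter, mem_Icc, hfiber W hW]

end Finset

namespace PowerSeries

variable {R : Type*} [CommRing R]

theorem coeff_X_mul_mk_one_pow_card {ι : Type*} [DecidableEq ι] (W : Finset ι) (s : ℕ) :
    coeff s ((X * mk 1 : PowerSeries R) ^ #W) = #{m ∈ finsuppAntidiag W s | m.support = W} := by
  have hcoeff : ∀ n, coeff n (X * mk 1 : PowerSeries R) = if n ≠ 0 then 1 else 0 := by
    rintro (_ | n) <;> simp [coeff_succ_X_mul]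
  rw [← prod_const, coeff_prod]
  simp only [hcoeff, prod_boole, sum_boole]
  congr 2
  ext m
  simp only [mem_filter, mem_finsuppAntidiag, and_congr_right_iff]
  rintro ⟨-, hsub⟩
  exact ⟨fun h => hsub.antisymm fun i hi => Finsupp.mem_support_iff.2 (h i hi),
    fun h i hi => Finsupp.mem_support_iff.1 (h ▸ hi)⟩

theorem X_mul_mk_one_pow_mul_one_sub_X_pow {n m : ℕ} (h : n ≤ m) :
    (X * mk 1 : PowerSeries R) ^ n * (1 - X) ^ m = X ^ n * (1 - X) ^ (m - n) := by
  rw [← Nat.add_sub_cancel' h, pow_add, Nat.add_sub_cancel_left, ← mul_assoc, ← mul_pow,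
    mul_assoc, mk_one_mul_one_sub_eq_one, mul_one]

theorem sum_X_pow_card {ι : Type*} (𝒮 : Finset (Finset ι)) :
    ∑ S ∈ 𝒮, (X : PowerSeries R) ^ #S = mk fun j => (#{S ∈ 𝒮 | #S = j} : R) := by
  ext j
  simp [coeff_X_pow, map_sum, @eq_comm _ j]

end PowerSeries

namespace SimpleGraph

section

variable {V : Type*} (G : SimpleGraph V) (k : Type*) [Field k]

theorem mem_edgeIdeal_iff {p : MvPolynomial V k} :
    p ∈ G.edgeIdeal k ↔ ∀ m ∈ p.support, ¬ G.IsIndepSet (m.support : Set V) := by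
  classical
  have hspan : G.edgeIdeal k = Ideal.span ((fun m => monomial m (1 : k)) ''
      {m | ∃ u v, G.Adj u v ∧ m = Finsupp.single u 1 + Finsupp.single v 1}) := by
    rw [edgeIdeal]
    congr 1
    ext p
    simp [X, monomial_mul, eq_comm]
  rw [hspan, mem_ideal_span_monomial_image]
  refine forall₂_congr fun m _ => ?_
  simp only [isIndepSet_iff, Set.Pairwise, Finset.mem_coe, Finsupp.mem_support_iff, not_forall,
    not_not, Set.mem_ofPred_eq]
  constructor
  · rintro ⟨_, ⟨u, v, huv, rfl⟩, hle⟩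
    refine ⟨u, ?_, v, ?_, huv.ne, huv⟩ <;> apply Nat.one_le_iff_ne_zero.1
    · simpa [huv.ne'] using hle u
    · simpa [huv.ne] using hle v
  · rintro ⟨u, hu, v, hv, -, huv⟩
    refine ⟨_, ⟨u, v, huv, rfl⟩, fun w => ?_⟩
    rcases eq_or_ne w u with rfl | hwu
    · simpa [huv.ne'] using Nat.one_le_iff_ne_zero.2 hu
    rcases eq_or_ne w v with rfl | hwv
    · simpa [huv.ne] using Nat.one_le_iff_ne_zero.2 hv
    simp [hwu.symm, hwv.symm]

variable [Fintype V]

open Classical in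
noncomputable def indepMonomials (s : ℕ) : Finset (V →₀ ℕ) :=
  (finsuppAntidiag univ s).filter fun m => G.IsIndepSet (m.support : Set V)

variable {G} in
theorem mem_indepMonomials {s : ℕ} {m : V →₀ ℕ} :
    m ∈ G.indepMonomials s ↔ m.degree = s ∧ G.IsIndepSet (m.support : Set V) := by
  simp [indepMonomials, Finsupp.degree_eq_sum]

theorem finrank_map_homogeneousSubmodule_edgeIdeal (s : ℕ) :
    Module.finrank k (Submodule.map (Ideal.Quotient.mkₐ k (G.edgeIdeal k)).toLinearMap
      (homogeneousSubmodule V k s)) = #(G.indepMonomials s) := by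
  classical
  set q := (Ideal.Quotient.mkₐ k (G.edgeIdeal k)).toLinearMap
  set P := restrictSupport k (G.indepMonomials s : Set (V →₀ ℕ))
  have hhom : homogeneousSubmodule V k s = restrictSupport k {m | m.degree = s} :=
    homogeneousSubmodule_eq_finsupp_supported V k s
  have hmap : (homogeneousSubmodule V k s).map q = P.map q := by
    refine le_antisymm ?_ (Submodule.map_mono ?_)
    · rw [hhom, restrictSupport_eq_span, Submodule.map_span_le]
      rintro _ ⟨m, hm, rfl⟩
      by_cases hind : G.IsIndepSet (m.support : Set V)
      · refine Submodule.mem_map_of_mem ?_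
        rw [mem_restrictSupport_iff]
        intro m' hm'
        rw [Finset.mem_coe, support_monomial, if_neg one_ne_zero, Finset.mem_singleton] at hm'
        exact mem_indepMonomials.2 ⟨hm' ▸ hm, hm' ▸ hind⟩
      · convert Submodule.zero_mem _
        rw [AlgHom.toLinearMap_apply, Ideal.Quotient.mkₐ_eq_mk, Ideal.Quotient.eq_zero_iff_mem,
          mem_edgeIdeal_iff, support_monomial, if_neg one_ne_zero]
        simpa using hind
    · rw [hhom]
      exact restrictSupport_mono k fun m hm => (mem_indepMonomials.1 hm).1
  have hinj : Function.Injective (q.domRestrict P) := by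
    rw [← LinearMap.ker_eq_bot, LinearMap.ker_eq_bot']
    rintro ⟨p, hp⟩ hqp
    have hpI : p ∈ G.edgeIdeal k := Ideal.Quotient.eq_zero_iff_mem.1 hqp
    ext1
    simp only [ZeroMemClass.coe_zero, ← support_eq_empty, Finset.eq_empty_iff_forall_notMem]
    exact fun m hm => (G.mem_edgeIdeal_iff k).1 hpI m hm (mem_indepMonomials.1 (hp hm)).2
  rw [hmap, ← LinearMap.range_domRestrict, LinearMap.finrank_range_of_inj hinj,
    Module.finrank_eq_card_basis (basisRestrictSupport k _)]
  simp

open Classical in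
noncomputable def indepFinsets : Finset (Finset V) :=
  univ.filter fun W => G.IsIndepSet (W : Set V)

variable {G} in
@[simp]
theorem mem_indepFinsets {W : Finset V} : W ∈ G.indepFinsets ↔ G.IsIndepSet (W : Set V) := by
  simp [indepFinsets]

theorem card_indepMonomials [DecidableEq V] (s : ℕ) :
    #(G.indepMonomials s) =
      ∑ W ∈ G.indepFinsets, #{m ∈ finsuppAntidiag W s | m.support = W} := by
  rw [card_eq_sum_card_fiberwise (t := G.indepFinsets) (f := Finsupp.support) fun m hm => by
    simpa using (mem_indepMonomials.1 hm).2]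
  refine sum_congr rfl fun W hW => congrArg card ?_
  ext m
  simp only [mem_filter, mem_indepMonomials, mem_finsuppAntidiag', and_congr_left_iff]
  rintro rfl
  rw [mem_indepFinsets] at hW
  exact ⟨fun h => ⟨h.1, subset_rfl⟩, fun h => ⟨h.1, hW⟩⟩

theorem quotHilbertSeries_edgeIdeal :
    quotHilbertSeries k V (G.edgeIdeal k) =
      ∑ W ∈ G.indepFinsets, (PowerSeries.X * PowerSeries.mk 1) ^ #W := by
  classical
  ext s
  rw [quotHilbertSeries, PowerSeries.coeff_mk, finrank_map_homogeneousSubmodule_edgeIdeal,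
    card_indepMonomials, map_sum]
  push_cast
  simp only [PowerSeries.coeff_X_mul_mk_one_pow_card]

end

section

variable {V : Type*} {G : SimpleGraph V}

theorem HasPropertyP.adj {u v a b : V} (h : G.HasPropertyP u v) (ha : G.Adj u a)
    (hb : G.Adj v b) (hbu : b ≠ u) : G.Adj a b := by
  by_cases hav : a = v
  · exact hav ▸ hb
  · exact (h a b ha.symm hav hb hbu).2

variable {d : ℕ} {x y : Fin d → V}

theorem not_adj_of_separated
    (hsep : ∀ i j : Fin d, j < i → ¬ G.Adj (x i) (x j) ∧ ¬ G.Adj (x i) (y j))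
    (i j : Fin d) : ¬ G.Adj (x i) (x j) := by
  rcases lt_trichotomy i j with h | rfl | h
  · exact fun hij => (hsep j i h).1 hij.symm
  · exact G.loopless.irrefl _
  · exact (hsep i j h).1

theorem le_of_adj_of_separated
    (hsep : ∀ i j : Fin d, j < i → ¬ G.Adj (x i) (x j) ∧ ¬ G.Adj (x i) (y j)) {i j : Fin d}
    (h : G.Adj (x i) (y j)) : i ≤ j :=
  not_lt.1 fun hji => (hsep i j hji).2 h

variable [DecidableEq V]

variable (G x y) in
open Classical in
noncomputable def matchingCompletion (W : Finset V) : Finset V :=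
  univ.image fun i => if ∃ w ∈ W, G.Adj (x i) w then y i else x i

variable (G x y) in
open Classical in
noncomputable def matchingRoots (g : Finset V) : Finset (Fin d) :=
  univ.filter fun i => y i ∈ g ∧ ∀ v ∈ g, G.Adj (x i) v → v = y i

theorem mem_matchingRoots {g : Finset V} {i : Fin d} :
    i ∈ G.matchingRoots x y g ↔ y i ∈ g ∧ ∀ v ∈ g, G.Adj (x i) v → v = y i := by
  simp [matchingRoots]

variable (G x y) in
def IsInducedSubmatching (S : Finset (Fin d)) : Prop :=
  ∀ i ∈ S, ∀ i' ∈ S, i ≠ i' →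
    ¬ G.Adj (x i) (x i') ∧ ¬ G.Adj (x i) (y i') ∧ ¬ G.Adj (y i) (y i')

theorem mem_matchingCompletion {W : Finset V} {v : V} :
    v ∈ G.matchingCompletion x y W ↔ ∃ i, ((∃ w ∈ W, G.Adj (x i) w) ∧ v = y i) ∨
      ((¬ ∃ w ∈ W, G.Adj (x i) w) ∧ v = x i) := by
  simp only [matchingCompletion, mem_image, mem_univ, true_and]
  refine exists_congr fun i => ?_
  split_ifs with h <;> simp [h, eq_comm]

theorem x_mem_or_y_mem_matchingCompletion (W : Finset V) (i : Fin d) :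
    x i ∈ G.matchingCompletion x y W ∨ y i ∈ G.matchingCompletion x y W := by
  simp only [mem_matchingCompletion]
  by_cases h : ∃ w ∈ W, G.Adj (x i) w
  · exact Or.inr ⟨i, Or.inl ⟨h, rfl⟩⟩
  · exact Or.inl ⟨i, Or.inr ⟨h, rfl⟩⟩

theorem y_mem_matchingCompletion (hinj : Injective (Sum.elim x y)) {W : Finset V}
    {i : Fin d} :
    y i ∈ G.matchingCompletion x y W ↔ ∃ w ∈ W, G.Adj (x i) w := by
  obtain ⟨-, hy, hxy⟩ := Sum.elim_injective.1 hinj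
  rw [mem_matchingCompletion]
  constructor
  · rintro ⟨j, ⟨h, hj⟩ | ⟨-, hj⟩⟩
    · exact hy hj ▸ h
    · exact absurd hj.symm (hxy j i)
  · exact fun h => ⟨i, Or.inl ⟨h, rfl⟩⟩

theorem card_matchingCompletion (hinj : Injective (Sum.elim x y)) (W : Finset V) :
    #(G.matchingCompletion x y W) = d := by
  obtain ⟨hx, hy, hxy⟩ := Sum.elim_injective.1 hinj
  rw [matchingCompletion, card_image_of_injective _ fun i j hij => ?_, card_univ,
    Fintype.card_fin]
  split_ifs at hij
  exacts [hy hij, absurd hij.symm (hxy j i), absurd hij (hxy i j), hx hij]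

theorem subset_matchingCompletion (hsurj : Surjective (Sum.elim x y))
    (hedge : ∀ i, G.Adj (x i) (y i)) {W : Finset V} (hW : G.IsIndepSet (W : Set V)) :
    W ⊆ G.matchingCompletion x y W := by
  intro w hw
  rw [mem_matchingCompletion]
  obtain ⟨i | i, rfl⟩ := hsurj w
  · exact ⟨i, Or.inr ⟨fun ⟨v, hv, hxv⟩ => hW hw hv hxv.ne hxv, rfl⟩⟩
  · exact ⟨i, Or.inl ⟨⟨y i, hw, hedge i⟩, rfl⟩⟩

theorem isIndepSet_matchingCompletion (hinj : Injective (Sum.elim x y))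
    (hsep : ∀ i j : Fin d, j < i → ¬ G.Adj (x i) (x j) ∧ ¬ G.Adj (x i) (y j))
    (hP : ∀ i, G.HasPropertyP (x i) (y i)) {W : Finset V} (hW : G.IsIndepSet (W : Set V)) :
    G.IsIndepSet (G.matchingCompletion x y W : Set V) := by
  obtain ⟨-, -, hxy⟩ := Sum.elim_injective.1 hinj
  have hyW : ∀ i, (∃ w ∈ W, G.Adj (x i) w) → ∀ v ∈ W, ¬ G.Adj (y i) v := by
    rintro i ⟨w, hw, hxw⟩ v hv hyv
    have hvx : v ≠ x i := by rintro rfl; exact hW hv hw hxw.ne hxw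
    have hwv := (hP i).adj hxw hyv hvx
    exact hW hw hv hwv.ne hwv
  have hxy' : ∀ i j, (¬ ∃ w ∈ W, G.Adj (x i) w) → (∃ w ∈ W, G.Adj (x j) w) →
      ¬ G.Adj (x i) (y j) := by
    rintro i j hi ⟨w, hw, hxw⟩ hadj
    have hne : x i ≠ x j := fun h => hi ⟨w, hw, h ▸ hxw⟩
    exact hi ⟨w, hw, ((hP j).adj hxw hadj.symm hne).symm⟩
  have hyy : ∀ i j, (∃ w ∈ W, G.Adj (x i) w) → (∃ w ∈ W, G.Adj (x j) w) →
      ¬ G.Adj (y i) (y j) := by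
    rintro i j ⟨w, hw, hxw⟩ hj hadj
    exact hyW j hj w hw ((hP i).adj hxw hadj (hxy i j).symm).symm
  intro u hu v hv _ huv
  rw [mem_coe, mem_matchingCompletion] at hu hv
  obtain ⟨i, ⟨hi, rfl⟩ | ⟨hi, rfl⟩⟩ := hu <;>
    obtain ⟨j, ⟨hj, rfl⟩ | ⟨hj, rfl⟩⟩ := hv
  · exact hyy i j hi hj huv
  · exact hxy' j i hj hi huv.symm
  · exact hxy' i j hi hj huv
  · exact not_adj_of_separated hsep i j huv

theorem matchingCompletion_congr {W W' : Finset V}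
    (h : ∀ i, (∃ w ∈ W', G.Adj (x i) w) ↔ ∃ w ∈ W, G.Adj (x i) w) :
    G.matchingCompletion x y W' = G.matchingCompletion x y W := by
  ext v
  simp only [mem_matchingCompletion, h]

theorem exists_mem_matchingRoots_adj (hinj : Injective (Sum.elim x y))
    (hedge : ∀ i, G.Adj (x i) (y i))
    (hsep : ∀ i j : Fin d, j < i → ¬ G.Adj (x i) (x j) ∧ ¬ G.Adj (x i) (y j))
    (hP : ∀ i, G.HasPropertyP (x i) (y i)) {W : Finset V} {i : Fin d}
    (hi : y i ∈ G.matchingCompletion x y W) :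
    ∃ j ∈ G.matchingRoots x y (G.matchingCompletion x y W), G.Adj (x i) (y j) := by
  obtain ⟨hx, -, -⟩ := Sum.elim_injective.1 hinj
  -- Separability puts any second neighbour `y j ∈ g` of `x i` above `i`, and Property P of the
  -- edge `j` hands the neighbour of `x j` in the roots on to `x i`.
  induction i using WellFoundedGT.induction with
  | _ i ih =>
  by_cases hroot : i ∈ G.matchingRoots x y (G.matchingCompletion x y W)
  · exact ⟨i, hroot, hedge i⟩
  simp only [mem_matchingRoots, hi, true_and, not_forall] at hroot
  obtain ⟨v, hv, hxv, hvy⟩ := hroot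
  rw [mem_matchingCompletion] at hv
  obtain ⟨j, ⟨hj, rfl⟩ | ⟨-, rfl⟩⟩ := hv
  · have hij : i < j := (le_of_adj_of_separated hsep hxv).lt_of_ne fun h => hvy (h ▸ rfl)
    obtain ⟨l, hl, hxl⟩ := ih j hij ((y_mem_matchingCompletion hinj).2 hj)
    exact ⟨l, hl, ((hP j).adj hxl hxv.symm (hx.ne hij.ne)).symm⟩
  · exact absurd hxv (not_adj_of_separated hsep i j)

theorem isInducedSubmatching_matchingRoots (hinj : Injective (Sum.elim x y))
    (hsep : ∀ i j : Fin d, j < i → ¬ G.Adj (x i) (x j) ∧ ¬ G.Adj (x i) (y j))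
    {g : Finset V} (hg : G.IsIndepSet (g : Set V)) :
    G.IsInducedSubmatching x y (G.matchingRoots x y g) := by
  obtain ⟨-, hy, -⟩ := Sum.elim_injective.1 hinj
  intro i hi i' hi' hne
  rw [mem_matchingRoots] at hi hi'
  exact ⟨not_adj_of_separated hsep i i', fun h => hne (hy (hi.2 _ hi'.1 h).symm),
    hg hi.1 hi'.1 (hy.ne hne)⟩

theorem IsInducedSubmatching.isIndepSet_image {S : Finset (Fin d)}
    (hS : G.IsInducedSubmatching x y S) : G.IsIndepSet (S.image y : Set V) := by
  rintro _ hu _ hv hne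
  simp only [coe_image, Set.mem_image, mem_coe] at hu hv
  obtain ⟨i, hi, rfl⟩ := hu
  obtain ⟨j, hj, rfl⟩ := hv
  exact (hS i hi j hj fun h => hne (h ▸ rfl)).2.2

theorem matchingRoots_matchingCompletion_image (hinj : Injective (Sum.elim x y))
    (hedge : ∀ i, G.Adj (x i) (y i))
    (hsep : ∀ i j : Fin d, j < i → ¬ G.Adj (x i) (x j) ∧ ¬ G.Adj (x i) (y j))
    (hP : ∀ i, G.HasPropertyP (x i) (y i)) {S : Finset (Fin d)}
    (hS : G.IsInducedSubmatching x y S) :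
    G.matchingRoots x y (G.matchingCompletion x y (S.image y)) = S := by
  obtain ⟨hx, hy, -⟩ := Sum.elim_injective.1 hinj
  ext i
  rw [mem_matchingRoots, y_mem_matchingCompletion hinj]
  constructor
  · rintro ⟨⟨w, hw, hxw⟩, hroot⟩
    obtain ⟨l, hl, rfl⟩ := mem_image.1 hw
    rwa [← hy (hroot (y l) ((y_mem_matchingCompletion hinj).2 ⟨y l, hw, hedge l⟩) hxw)]
  · intro hi
    refine ⟨⟨y i, mem_image_of_mem y hi, hedge i⟩, fun v hv hxv => ?_⟩
    rw [mem_matchingCompletion] at hv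
    obtain ⟨j, ⟨⟨w, hw, hxw⟩, rfl⟩ | ⟨-, rfl⟩⟩ := hv
    · obtain ⟨l, hl, rfl⟩ := mem_image.1 hw
      by_contra hji
      have hij : i < j := (le_of_adj_of_separated hsep hxv).lt_of_ne fun h => hji (h ▸ rfl)
      have hxl : G.Adj (x i) (y l) := ((hP j).adj hxw hxv.symm (hx.ne hij.ne)).symm
      obtain rfl : l = i := by_contra fun hli => (hS i hi l hl (Ne.symm hli)).2.1 hxl
      exact not_lt.2 (le_of_adj_of_separated hsep hxw) hij
    · exact absurd hxv (not_adj_of_separated hsep i j)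

theorem isIndepSet_and_matchingCompletion_eq_iff (hinj : Injective (Sum.elim x y))
    (hsurj : Surjective (Sum.elim x y)) (hedge : ∀ i, G.Adj (x i) (y i))
    (hsep : ∀ i j : Fin d, j < i → ¬ G.Adj (x i) (x j) ∧ ¬ G.Adj (x i) (y j))
    (hP : ∀ i, G.HasPropertyP (x i) (y i)) {W : Finset V} (hW : G.IsIndepSet (W : Set V))
    (W' : Finset V) :
    G.IsIndepSet (W' : Set V) ∧ G.matchingCompletion x y W' = G.matchingCompletion x y W ↔
      (G.matchingRoots x y (G.matchingCompletion x y W)).image y ⊆ W' ∧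
        W' ⊆ G.matchingCompletion x y W := by
  have hg := isIndepSet_matchingCompletion hinj hsep hP hW
  constructor
  · rintro ⟨hW', hc⟩
    have hsub := subset_matchingCompletion hsurj hedge hW'
    refine ⟨fun v hv => ?_, hc ▸ hsub⟩
    obtain ⟨i, hi, rfl⟩ := mem_image.1 hv
    rw [mem_matchingRoots] at hi
    obtain ⟨w, hw, hxw⟩ := (y_mem_matchingCompletion hinj).1 (hc ▸ hi.1)
    rwa [← hi.2 w (hc ▸ hsub hw) hxw]
  · rintro ⟨hr, hsub⟩
    refine ⟨hg.mono (coe_subset.2 hsub), matchingCompletion_congr fun i => ?_⟩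
    rw [← y_mem_matchingCompletion (W := W) hinj]
    constructor
    · rintro ⟨w, hw, hxw⟩
      exact (x_mem_or_y_mem_matchingCompletion W i).resolve_left fun hxi =>
        hg hxi (hsub hw) hxw.ne hxw
    · intro hi
      obtain ⟨j, hj, hxj⟩ := exists_mem_matchingRoots_adj hinj hedge hsep hP hi
      exact ⟨y j, hr (mem_image_of_mem y hj), hxj⟩

theorem card_le_of_isIndepSet (hinj : Injective (Sum.elim x y))
    (hsurj : Surjective (Sum.elim x y)) (hedge : ∀ i, G.Adj (x i) (y i)) {W : Finset V}
    (hW : G.IsIndepSet (W : Set V)) : #W ≤ d :=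
  card_matchingCompletion (G := G) hinj W ▸
    card_le_card (subset_matchingCompletion hsurj hedge hW)

open Classical in
theorem sum_indepFinsets_pow_mul_one_sub_pow [Fintype V] {R : Type*} [CommRing R]
    (hperf : Bijective (Sum.elim x y)) (hedge : ∀ i, G.Adj (x i) (y i))
    (hsep : ∀ i j : Fin d, j < i → ¬ G.Adj (x i) (x j) ∧ ¬ G.Adj (x i) (y j))
    (hP : ∀ i, G.HasPropertyP (x i) (y i)) (u : R) :
    ∑ W ∈ G.indepFinsets, u ^ #W * (1 - u) ^ (d - #W) =
      ∑ S ∈ univ.filter (G.IsInducedSubmatching x y), u ^ #S := by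
  obtain ⟨hinj, hsurj⟩ := hperf
  have hfiber := fun {W} (hW : W ∈ G.indepFinsets) =>
    isIndepSet_and_matchingCompletion_eq_iff hinj hsurj hedge hsep hP (mem_indepFinsets.1 hW)
  rw [sum_pow_mul_one_sub_pow_eq_of_interval_partition u _ (G.matchingCompletion x y)
    (fun g => (G.matchingRoots x y g).image y) (fun W _ => card_matchingCompletion hinj W)
    fun W hW W' => by simpa using hfiber hW W']
  refine sum_nbij' (G.matchingRoots x y) (fun S => G.matchingCompletion x y (S.image y))
    ?_ ?_ ?_ ?_ ?_
  · intro g hg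
    obtain ⟨W, hW, rfl⟩ := mem_image.1 hg
    simpa using isInducedSubmatching_matchingRoots hinj hsep
      (isIndepSet_matchingCompletion hinj hsep hP (mem_indepFinsets.1 hW))
  · intro S hS
    exact mem_image.2 ⟨_, mem_indepFinsets.2 (mem_filter.1 hS).2.isIndepSet_image, rfl⟩
  · intro g hg
    obtain ⟨W, hW, rfl⟩ := mem_image.1 hg
    refine ((hfiber hW _).2 ⟨subset_rfl, fun v hv => ?_⟩).2
    obtain ⟨i, hi, rfl⟩ := mem_image.1 hv
    exact (mem_matchingRoots.1 hi).1
  · intro S hS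
    exact matchingRoots_matchingCompletion_image hinj hedge hsep hP (mem_filter.1 hS).2
  · intro g _
    rw [card_image_of_injective _ (Sum.elim_injective.1 hinj).2.1]

end

end SimpleGraph

/-- for a graph with a perfect matching `M = {{x_i,y_i}}` of Property-P
edges satisfying the separability condition, the entry `h_j` of the `h`-vector of
`R/I(G)` (i.e. the `j`-th coefficient of `HS_{R/I(G)}(t)·(1-t)^d`, `d = dim R/I(G) = |M|`)
equals the number of `j`-element subsets of `M` forming an induced matching of `G`. -/
theorem h_vector_counts_induced_matchings
    {k : Type*} [Field k] {V : Type*} [Fintype V]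
    (G : SimpleGraph V) (d : ℕ) (x y : Fin d → V)
    (hperf : Function.Bijective (fun i : Fin d ⊕ Fin d => Sum.elim x y i))
    (hedge : ∀ i : Fin d, G.Adj (x i) (y i))
    (hP : ∀ i : Fin d, G.HasPropertyP (x i) (y i))
    (hsep : ∀ i j : Fin d, j < i →
      ¬ G.Adj (x i) (x j) ∧ ¬ G.Adj (x i) (y j)) :
    quotHilbertSeries k V (G.edgeIdeal k) * (1 - PowerSeries.X) ^ d =
      PowerSeries.mk fun j =>
        ((Set.ncard {S : Finset (Fin d) | S.card = j ∧
          ∀ i ∈ S, ∀ i' ∈ S, i ≠ i' →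
            ¬ G.Adj (x i) (x i') ∧ ¬ G.Adj (x i) (y i') ∧
              ¬ G.Adj (y i) (y i')}) : ℤ) := by
  classical
  rw [G.quotHilbertSeries_edgeIdeal k, sum_mul, sum_congr rfl fun W hW =>
    PowerSeries.X_mul_mk_one_pow_mul_one_sub_X_pow
      (G.card_le_of_isIndepSet hperf.1 hperf.2 hedge (SimpleGraph.mem_indepFinsets.1 hW)),
    G.sum_indepFinsets_pow_mul_one_sub_pow hperf hedge hsep hP, PowerSeries.sum_X_pow_card]
  congr
  funext j
  rw [← Set.ncard_coe_finset]
  congr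
  ext S
  simp [SimpleGraph.IsInducedSubmatching, and_comm]
end

section
/- Let G be a graph with exactly one loop, at vertex x, and let y be a fresh vertex; let G^pol be the graph obtained by replacing the loop x² with the edge {x,y} (polarization of the loop). Then for an edge {u,w} of G with u, w both distinct from x, the edge {u,w} has Property P in G if and only if it has Property P in G^pol. -/
/-- The polarization of the loop at `x`: replace the loop `x²` by an edge `{x, y}` to a
fresh vertex `y` (here `none`), keeping all non-loop edges. -/
def LoopGraph.polarizeLoop {V : Type*} (G : LoopGraph V) (x : V) :
    LoopGraph (Option V) where
  Adj a b := (∃ u v : V, a = some u ∧ b = some v ∧ u ≠ v ∧ G.Adj u v) ∨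
    (a = some x ∧ b = none) ∨ (a = none ∧ b = some x)
  symm := by
    rintro a b (⟨u, v, rfl, rfl, huv, h⟩ | ⟨rfl, rfl⟩ | ⟨rfl, rfl⟩)
    · exact Or.inl ⟨v, u, rfl, rfl, huv.symm, G.symm _ _ h⟩
    · exact Or.inr (Or.inr ⟨rfl, rfl⟩)
    · exact Or.inr (Or.inl ⟨rfl, rfl⟩)

/-! Both sides are Property P of `{u, w}` in the loop-free part of `G`: in `G` because
neither `u` nor `w` carries a loop, in `G^pol` because the fresh vertex `y` is adjacent only
to `x`, so it is a neighbour of neither `u` nor `w`. -/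

namespace LoopGraph

variable {V : Type*} (G : LoopGraph V)

def deleteLoops : LoopGraph V where
  Adj a b := a ≠ b ∧ G.Adj a b
  symm a b h := ⟨h.1.symm, G.symm a b h.2⟩

@[simp]
lemma deleteLoops_adj {a b : V} : G.deleteLoops.Adj a b ↔ a ≠ b ∧ G.Adj a b := Iff.rfl

lemma hasPropertyP_deleteLoops_iff {u w : V} (hu : ¬G.Adj u u) (hw : ¬G.Adj w w) :
    G.deleteLoops.HasPropertyP u w ↔ G.HasPropertyP u w := by
  have hne_of_adj {a b : V} (h : G.Adj a b) (hb : ¬G.Adj b b) : a ≠ b := by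
    rintro rfl
    exact hb h
  simp only [HasPropertyP, deleteLoops_adj, ne_eq, not_true_eq_false, false_and,
    not_false_eq_true, true_and, hu, hw]
  refine forall₂_congr fun a b => ⟨fun h hau haw hwb hbu => ?_, fun h hau haw hwb hbu => ?_⟩
  · have hab := h ⟨hne_of_adj hau hu, hau⟩ haw ⟨(hne_of_adj (G.symm _ _ hwb) hw).symm, hwb⟩ hbu
    exact ⟨hab.1, hab.2.2⟩
  · obtain ⟨hab, hadj⟩ := h hau.2 haw hwb.2 hbu
    exact ⟨hab, hab, hadj⟩

variable (x : V)

@[simp]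
lemma polarizeLoop_adj_some_some {a b : V} :
    (G.polarizeLoop x).Adj (some a) (some b) ↔ G.deleteLoops.Adj a b := by
  simp [polarizeLoop]

@[simp]
lemma polarizeLoop_adj_none_some {b : V} : (G.polarizeLoop x).Adj none (some b) ↔ b = x := by
  simp [polarizeLoop, eq_comm]

@[simp]
lemma polarizeLoop_adj_some_none {a : V} : (G.polarizeLoop x).Adj (some a) none ↔ a = x := by
  simp [polarizeLoop]

lemma polarizeLoop_not_adj_self (a : Option V) : ¬(G.polarizeLoop x).Adj a a := by
  cases a <;> simp [polarizeLoop]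

lemma hasPropertyP_polarizeLoop_some_iff {u w : V} (hux : u ≠ x) (hwx : w ≠ x) :
    (G.polarizeLoop x).HasPropertyP (some u) (some w) ↔ G.deleteLoops.HasPropertyP u w := by
  simp [HasPropertyP, polarizeLoop_not_adj_self, Option.forall, hux, hwx]

end LoopGraph

theorem propertyP_iff_polarization_general {V : Type*}
    (G : LoopGraph V) (x : V)
    (honly : ∀ v : V, G.Adj v v → v = x)
    (u w : V) (hux : u ≠ x) (hwx : w ≠ x) :
    G.HasPropertyP u w ↔ (G.polarizeLoop x).HasPropertyP (some u) (some w) := by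
  rw [G.hasPropertyP_polarizeLoop_some_iff x hux hwx,
    G.hasPropertyP_deleteLoops_iff (fun h => hux (honly u h)) (fun h => hwx (honly w h))]

/-- if `G` has exactly one loop, at `x`, and `{u,w}` is an edge of `G`
with `u, w ≠ x`, then `{u,w}` has Property P in `G` iff it has Property P in the
polarization `G^pol`. -/
theorem propertyP_iff_polarization {V : Type*} [Fintype V]
    (G : LoopGraph V) (x : V) (hloop : G.Adj x x)
    (honly : ∀ v : V, G.Adj v v → v = x)
    (u w : V) (huw : G.Adj u w) (hne : u ≠ w) (hux : u ≠ x) (hwx : w ≠ x) :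
    G.HasPropertyP u w ↔ (G.polarizeLoop x).HasPropertyP (some u) (some w) :=
  propertyP_iff_polarization_general G x honly u w hux hwx
end
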